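/- arXiv:2107.06715 — 2 statements merged into one kernel-verified Lean document; each statement's English description precedes it below -/
import Mathlib

section
/- Let U be a finite nonempty ground set, F a nonempty family of subsets of U, and N a natural number. If for each u ∈ U a weight w(u) is chosen uniformly and independently at random from {1,...,N}, then with probability at least 1 - |U|/N there is a unique set S' ∈ F minimizing the total weight w(S') = Σ_{x∈S'} w(x) over all S ∈ F. -/
open scoped Classical

/-!
Call `u` ambiguous for `w` if some minimum-weight set contains `u` and another one avoids it; if
`w` does not isolate `F`, two distinct minimizers exhibit an ambiguous element. Comparing a
minimizer through `u` with one avoiding `u` shows that, once the weights off `u` are fixed, at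
most one value of `w u` makes `u` ambiguous: the value at which sets with and without `u` tie.
So for each `u` at most a `1/N` fraction of the weightings make `u` ambiguous, and a union bound
over `u` bounds the probability of failure by `|U|/N`.
-/

open Finset Function

section Isolation

variable {α β M : Type*} [AddCommMonoid M] [LinearOrder M]

def IsMinWeight (F : Finset (Finset α)) (w : α → M) (S : Finset α) : Prop :=
  S ∈ F ∧ ∀ T ∈ F, ∑ x ∈ S, w x ≤ ∑ x ∈ T, w x

def Isolates (w : α → M) (F : Finset (Finset α)) : Prop :=
  ∃! S, IsMinWeight F w S

def IsAmbiguous (F : Finset (Finset α)) (w : α → M) (u : α) : Prop :=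
  ∃ S T, IsMinWeight F w S ∧ IsMinWeight F w T ∧ u ∈ S ∧ u ∉ T

variable {F : Finset (Finset α)}

theorem exists_isMinWeight (hF : F.Nonempty) (w : α → M) : ∃ S, IsMinWeight F w S :=
  let ⟨S, hS, hmin⟩ := F.exists_min_image (fun S => ∑ x ∈ S, w x) hF
  ⟨S, hS, hmin⟩

theorem exists_isAmbiguous_of_not_isolates {w : α → M} (hF : F.Nonempty)
    (h : ¬ Isolates w F) : ∃ u, IsAmbiguous F w u := by
  obtain ⟨S, hS⟩ := exists_isMinWeight hF w
  obtain ⟨T, hT, hTS⟩ : ∃ T, IsMinWeight F w T ∧ T ≠ S := by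
    by_contra! h'
    exact h ⟨S, hS, h'⟩
  by_cases hST : S ⊆ T
  · obtain ⟨u, huT, huS⟩ := not_subset.1 fun hTS' => hTS (Subset.antisymm hTS' hST)
    exact ⟨u, T, S, hT, hS, huT, huS⟩
  · obtain ⟨u, huS, huT⟩ := not_subset.1 hST
    exact ⟨u, S, T, hS, hT, huS, huT⟩

variable [IsOrderedCancelAddMonoid M]

theorem IsMinWeight.apply_le_of_forall_ne_eq {w w' : α → M} {u : α} {S T : Finset α}
    (hw : ∀ x ≠ u, w x = w' x) (hS : IsMinWeight F w S) (hT : IsMinWeight F w' T)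
    (huS : u ∈ S) (huT : u ∉ T) : w u ≤ w' u := by
  have sum_eq (X : Finset α) (hX : u ∉ X) : ∑ x ∈ X, w x = ∑ x ∈ X, w' x :=
    sum_congr rfl fun x hx => hw x (ne_of_mem_of_not_mem hx hX)
  refine le_of_add_le_add_right (a := ∑ x ∈ S.erase u, w' x) ?_
  calc w u + ∑ x ∈ S.erase u, w' x = ∑ x ∈ S, w x := by
        rw [← sum_eq _ (notMem_erase u S), add_sum_erase S w huS]
    _ ≤ ∑ x ∈ T, w x := hS.2 T hT.1
    _ = ∑ x ∈ T, w' x := sum_eq T huT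
    _ ≤ ∑ x ∈ S, w' x := hT.2 S hS.1
    _ = w' u + ∑ x ∈ S.erase u, w' x := (add_sum_erase S w' huS).symm

theorem IsAmbiguous.eq_of_forall_ne_eq {w w' : α → M} {u : α} (h : IsAmbiguous F w u)
    (h' : IsAmbiguous F w' u) (hw : ∀ x ≠ u, w x = w' x) : w = w' := by
  obtain ⟨S, T, hS, hT, huS, huT⟩ := h
  obtain ⟨S', T', hS', hT', huS', huT'⟩ := h'
  funext x
  rcases eq_or_ne x u with rfl | hx
  · exact le_antisymm (hS.apply_le_of_forall_ne_eq hw hT' huS huT')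
      (hS'.apply_le_of_forall_ne_eq (fun y hy => (hw y hy).symm) hT huS' huT)
  · exact hw x hx

section Counting

variable [Fintype α] [DecidableEq α] [Fintype β] {f : β → M}

theorem card_filter_isAmbiguous_mul_card_le (hf : Injective f) (u : α) :
    #{w : α → β | IsAmbiguous F (f ∘ w) u} * Fintype.card β ≤
      Fintype.card β ^ Fintype.card α := by
  set A := ({w : α → β | IsAmbiguous F (f ∘ w) u} : Finset (α → β))
  have update_injOn : Set.InjOn (fun p : (α → β) × β => update p.1 u p.2)
      (A ×ˢ (univ : Finset β) : Finset ((α → β) × β)) := by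
    rintro ⟨w, b⟩ hwb ⟨w', b'⟩ hwb' heq
    simp only [mem_coe, mem_product, A, mem_filter] at hwb hwb'
    have hb : b = b' := by simpa using congrFun heq u
    have hw : ∀ x ≠ u, (f ∘ w) x = (f ∘ w') x := fun x hx => by
      simpa [hx] using congrArg f (congrFun heq x)
    rw [hf.comp_left (hwb.1.2.eq_of_forall_ne_eq hwb'.1.2 hw), hb]
  calc #A * Fintype.card β = #(A ×ˢ (univ : Finset β)) := by rw [card_product, card_univ]
    _ ≤ #(univ : Finset (α → β)) := card_le_card_of_injOn _ (fun _ _ => mem_univ _) update_injOn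
    _ = Fintype.card β ^ Fintype.card α := by rw [card_univ, Fintype.card_fun]

theorem card_filter_not_isolates_mul_card_le (hF : F.Nonempty) (hf : Injective f) :
    #{w : α → β | ¬ Isolates (f ∘ w) F} * Fintype.card β ≤
      Fintype.card α * Fintype.card β ^ Fintype.card α := by
  have bad_subset : ({w : α → β | ¬ Isolates (f ∘ w) F} : Finset _) ⊆
      univ.biUnion fun u => {w | IsAmbiguous F (f ∘ w) u} := by
    intro w hw
    obtain ⟨u, hu⟩ := exists_isAmbiguous_of_not_isolates hF (mem_filter.1 hw).2
    exact mem_biUnion.2 ⟨u, mem_univ u, mem_filter.2 ⟨mem_univ w, hu⟩⟩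
  calc #{w : α → β | ¬ Isolates (f ∘ w) F} * Fintype.card β
      ≤ (∑ u, #{w : α → β | IsAmbiguous F (f ∘ w) u}) * Fintype.card β := by
        gcongr
        exact (card_le_card bad_subset).trans card_biUnion_le
    _ = ∑ u, #{w : α → β | IsAmbiguous F (f ∘ w) u} * Fintype.card β := sum_mul _ _ _
    _ ≤ ∑ _u : α, Fintype.card β ^ Fintype.card α :=
        sum_le_sum fun u _ => card_filter_isAmbiguous_mul_card_le hf u
    _ = Fintype.card α * Fintype.card β ^ Fintype.card α := by simp

end Counting

end Isolation

theorem isolation_lemma_general {α : Type*} [Fintype α] [DecidableEq α]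
    (F : Finset (Finset α)) (hF : F.Nonempty) (N : ℕ) (hN : 0 < N) :
    (1 : ℚ) - (Fintype.card α : ℚ) / N ≤
      ((Finset.univ.filter (fun w : α → Fin N =>
          ∃! S', S' ∈ F ∧ ∀ S ∈ F,
            (∑ x ∈ S', ((w x : ℕ) + 1)) ≤ ∑ x ∈ S, ((w x : ℕ) + 1))).card : ℚ) /
        (Fintype.card (α → Fin N) : ℚ) := by
  set shift : Fin N → ℕ := fun i => i + 1
  have hshift : Injective shift := fun i j h => Fin.ext (by simpa [shift] using h)
  change _ ≤ (#{w : α → Fin N | Isolates (shift ∘ w) F} : ℚ) / _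
  have hbad := card_filter_not_isolates_mul_card_le hF hshift
  have hsplit := card_filter_add_card_filter_not (s := (univ : Finset (α → Fin N)))
    fun w => Isolates (shift ∘ w) F
  rw [card_univ] at hsplit
  simp only [Fintype.card_fun, Fintype.card_fin] at hsplit hbad ⊢
  have hNq : (0 : ℚ) < N := by exact_mod_cast hN
  have hbadq : (#{w : α → Fin N | ¬ Isolates (shift ∘ w) F} : ℚ) ≤
      Fintype.card α * (N : ℚ) ^ Fintype.card α / N := by
    rw [le_div_iff₀ hNq]; exact_mod_cast hbad
  have hsplitq : (#{w : α → Fin N | Isolates (shift ∘ w) F} : ℚ) +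
      #{w : α → Fin N | ¬ Isolates (shift ∘ w) F} = (N : ℚ) ^ Fintype.card α := by
    exact_mod_cast hsplit
  push_cast
  rw [le_div_iff₀ (by positivity)]
  calc (1 - Fintype.card α / N) * (N : ℚ) ^ Fintype.card α
      = N ^ Fintype.card α - Fintype.card α * (N : ℚ) ^ Fintype.card α / N := by ring
    _ ≤ _ := by linarith

/-- Isolation Lemma (Mulmuley–Vazirani–Vazirani): choosing weights uniformly and
independently from `{1,...,N}`, with probability at least `1 - |U|/N` there is a unique
member of the nonempty family `F` of minimum total weight. -/
theorem isolation_lemma {α : Type*} [Fintype α] [DecidableEq α] [Nonempty α]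
    (F : Finset (Finset α)) (hF : F.Nonempty) (N : ℕ) (hN : 0 < N) :
    (1 : ℚ) - (Fintype.card α : ℚ) / N ≤
      ((Finset.univ.filter (fun w : α → Fin N =>
          ∃! S', S' ∈ F ∧ ∀ S ∈ F,
            (∑ x ∈ S', ((w x : ℕ) + 1)) ≤ ∑ x ∈ S, ((w x : ℕ) + 1))).card : ℚ) /
        (Fintype.card (α → Fin N) : ℚ) :=
  isolation_lemma_general F hF N hN
end

section
/- Let G be a finite undirected graph, X ⊆ V(G), and v₁ ∈ X a fixed vertex. Then the number of consistent cuts (X_L, X_R) of G[X] (i.e., partitions of X with no edge of G between X_L and X_R) satisfying v₁ ∈ X_L equals 2^(cc(G[X]) - 1), where cc(G[X]) is the number of connected components of the induced subgraph G[X]. -/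
open scoped Classical

/-!
A consistent left side `X_L` is closed under adjacency inside `G[X]`, hence a union of connected
components of `G[X]`; conversely every union of components is consistent, and distinct sets of
components give distinct unions since components are nonempty. So consistent cuts with `v₁ ∈ X_L`
correspond to the sets of components containing the component of `v₁`, of which there are
`2 ^ (cc(G[X]) - 1)`.
-/

open Finset

theorem Finset.card_filter_mem_univ {α : Type*} [Fintype α] [DecidableEq α] (a : α) :
    #{S : Finset α | a ∈ S} = 2 ^ (Fintype.card α - 1) := by
  have hcount : #{S : Finset α | a ∈ S} = #(univ.erase a).powerset := by
    refine card_nbij' (fun S ↦ S.erase a) (insert a) (fun S _ ↦ by simp)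
      (fun T _ ↦ mem_filter.2 ⟨mem_univ _, mem_insert_self a T⟩) ?_ ?_
    · intro S hS
      exact insert_erase (mem_filter.1 hS).2
    · intro T hT
      exact erase_insert fun ha ↦ notMem_erase a univ (mem_powerset.1 hT ha)
  rw [hcount, card_powerset, card_erase_of_mem (mem_univ a), card_univ]

namespace SimpleGraph

variable {V : Type*}

theorem Reachable.mem_of_adj_closed {G : SimpleGraph V} {s : Set V}
    (hs : ∀ ⦃u v⦄, G.Adj u v → u ∈ s → v ∈ s) {u v : V} (h : G.Reachable u v) (hu : u ∈ s) :
    v ∈ s := by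
  rw [reachable_iff_reflTransGen] at h
  induction h with
  | refl => exact hu
  | tail _ hadj ih => exact hs hadj ih

variable [DecidableEq V] (G : SimpleGraph V) (X : Finset V)

def IsConsistentCut (XL : Finset V) : Prop :=
  XL ⊆ X ∧ ∀ u ∈ XL, ∀ v ∈ X \ XL, ¬ G.Adj u v

noncomputable def unionOfComponents (S : Finset (G.induce (X : Set V)).ConnectedComponent) :
    Finset V :=
  {v ∈ X | ∃ h : v ∈ X, (G.induce (X : Set V)).connectedComponentMk ⟨v, h⟩ ∈ S}

variable {G X}

theorem mem_unionOfComponents {S : Finset (G.induce (X : Set V)).ConnectedComponent}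
    {v : V} (hv : v ∈ X) :
    v ∈ G.unionOfComponents X S ↔ (G.induce (X : Set V)).connectedComponentMk ⟨v, hv⟩ ∈ S := by
  simp [unionOfComponents, hv]

variable (G X)

theorem unionOfComponents_injective : Function.Injective (G.unionOfComponents X) := by
  intro S T hST
  ext c
  induction c using ConnectedComponent.ind with
  | h v => rw [← mem_unionOfComponents v.2, hST, mem_unionOfComponents]

theorem isConsistentCut_unionOfComponents
    (S : Finset (G.induce (X : Set V)).ConnectedComponent) :
    G.IsConsistentCut X (G.unionOfComponents X S) := by
  refine ⟨filter_subset _ _, fun u hu v hv hadj ↦ ?_⟩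
  obtain ⟨hvX, hvS⟩ := mem_sdiff.1 hv
  obtain ⟨huX, huS⟩ := (mem_filter.1 hu).2
  have hsame : (G.induce (X : Set V)).connectedComponentMk ⟨u, huX⟩ =
      (G.induce (X : Set V)).connectedComponentMk ⟨v, hvX⟩ :=
    ConnectedComponent.connectedComponentMk_eq_of_adj hadj
  exact hvS ((mem_unionOfComponents hvX).2 (hsame ▸ huS))

variable {G X}

theorem IsConsistentCut.eq_unionOfComponents {XL : Finset V} (h : G.IsConsistentCut X XL) :
    ∃ S, G.unionOfComponents X S = XL := by
  obtain ⟨hsub, hcons⟩ := h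
  have hclosed : ∀ ⦃u v : (X : Set V)⦄, (G.induce (X : Set V)).Adj u v →
      u ∈ {w | w.1 ∈ XL} → v ∈ {w | w.1 ∈ XL} := fun u v hadj hu ↦ by
    by_contra hv
    exact hcons u hu v (mem_sdiff.2 ⟨mem_coe.1 v.2, hv⟩) hadj
  refine ⟨univ.filter fun c ↦
    ∃ w : (X : Set V), w.1 ∈ XL ∧ (G.induce (X : Set V)).connectedComponentMk w = c, ?_⟩
  ext v
  constructor
  · intro hv
    obtain ⟨w, hw, hwv⟩ := (mem_filter.1 ((mem_unionOfComponents (mem_filter.1 hv).1).1 hv)).2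
    exact (ConnectedComponent.exact hwv).mem_of_adj_closed hclosed hw
  · intro hv
    exact (mem_unionOfComponents (hsub hv)).2 (mem_filter.2 ⟨mem_univ _, _, hv, rfl⟩)

end SimpleGraph

open SimpleGraph in
/-- A cut `(X_L, X_R)` of `X` is represented by its left side `X_L`, with `X_R = X \ X_L`. -/
theorem count_consistent_cuts {V : Type*} [Fintype V] [DecidableEq V]
    (G : SimpleGraph V) (X : Finset V) (v₁ : V) (hv : v₁ ∈ X) :
    (Finset.univ.filter (fun XL : Finset V =>
        XL ⊆ X ∧ v₁ ∈ XL ∧ ∀ u ∈ XL, ∀ v ∈ X \ XL, ¬ G.Adj u v)).card =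
      2 ^ (Nat.card (G.induce (X : Set V)).ConnectedComponent - 1) := by
  set c₁ := (G.induce (X : Set V)).connectedComponentMk ⟨v₁, hv⟩
  have hcuts : univ.filter (fun XL : Finset V =>
        XL ⊆ X ∧ v₁ ∈ XL ∧ ∀ u ∈ XL, ∀ v ∈ X \ XL, ¬ G.Adj u v) =
      (univ.filter (c₁ ∈ ·)).image (G.unionOfComponents X) := by
    ext XL
    simp only [mem_filter, mem_univ, true_and, mem_image]
    constructor
    · rintro ⟨hsub, hv₁, hcons⟩
      obtain ⟨S, rfl⟩ := (show G.IsConsistentCut X XL from ⟨hsub, hcons⟩).eq_unionOfComponents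
      exact ⟨S, (mem_unionOfComponents hv).1 hv₁, rfl⟩
    · rintro ⟨S, hS, rfl⟩
      obtain ⟨hsub, hcons⟩ := isConsistentCut_unionOfComponents G X S
      exact ⟨hsub, (mem_unionOfComponents hv).2 hS, hcons⟩
  rw [hcuts, card_image_of_injective _ (unionOfComponents_injective G X), card_filter_mem_univ,
    Nat.card_eq_fintype_card]
end
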